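/- arXiv:2004.11330 — 3 statements merged into one kernel-verified Lean document; each statement's English description precedes it below -/
import Mathlib

section
/- Let Ω ⊂ ℝ² be open and let u : Ω → ℝ be of class C². For q ∈ Ω one has T(q) = 0 if and only if either q is a critical point of u (∇u(q) = 0), or there exists θ ∈ [0,2π) such that u_θ(q) = 0 and ∇u_θ(q) = 0. Moreover, in the second alternative with ∇u(q) ≠ 0, one may take e_θ = (u_y(q), −u_x(q))/|∇u(q)|. -/
open Real Set MeasureTheory

noncomputable section

/-- Partial derivative in the `x` direction. -/
def pdx (u : ℝ × ℝ → ℝ) (q : ℝ × ℝ) : ℝ := fderiv ℝ u q (1, 0)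

/-- Partial derivative in the `y` direction. -/
def pdy (u : ℝ × ℝ → ℝ) (q : ℝ × ℝ) : ℝ := fderiv ℝ u q (0, 1)

/-- Curvature of the level set of `u`:
`𝔎 = −(u_yy u_x² − 2 u_xy u_x u_y + u_xx u_y²)/|∇u|³`. -/
def crv (u : ℝ × ℝ → ℝ) (q : ℝ × ℝ) : ℝ :=
  -(pdy (pdy u) q * (pdx u q) ^ 2 - 2 * pdy (pdx u) q * pdx u q * pdy u q
      + pdx (pdx u) q * (pdy u q) ^ 2) / (Real.sqrt ((pdx u q) ^ 2 + (pdy u q) ^ 2)) ^ 3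

/-- The vector field
`T(q) = (u_yy u_x − u_xy u_y, u_xx u_y − u_xy u_x)(q)`. -/
def Tvec (u : ℝ × ℝ → ℝ) (q : ℝ × ℝ) : ℝ × ℝ :=
  (pdy (pdy u) q * pdx u q - pdy (pdx u) q * pdy u q,
   pdx (pdx u) q * pdy u q - pdy (pdx u) q * pdx u q)

/-- Directional derivative `u_θ = ⟨∇u, e_θ⟩`, `e_θ = (cos θ, sin θ)`. -/
def dird (u : ℝ × ℝ → ℝ) (θ : ℝ) (q : ℝ × ℝ) : ℝ :=
  Real.cos θ * pdx u q + Real.sin θ * pdy u q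

/-- `f` is of class `C^{1,α}` for some `α ∈ (0,1]` (locally Hölder derivative). -/
def C1Alpha (f : ℝ → ℝ) : Prop :=
  ContDiff ℝ 1 f ∧ ∃ α : NNReal, 0 < α ∧ α ≤ 1 ∧
    ∀ s : Set ℝ, IsCompact s → ∃ C : NNReal, HolderOnWith C α (deriv f) s

/-- `Ω` has smooth (`C^∞`) boundary: there is a global smooth defining function. -/
def SmoothBoundary (Ω : Set (ℝ × ℝ)) : Prop :=
  ∃ ρ : ℝ × ℝ → ℝ, ContDiff ℝ (⊤ : ℕ∞) ρ ∧ Ω = {p | ρ p < 0} ∧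
    ∀ p ∈ frontier Ω, ρ p = 0 ∧ fderiv ℝ ρ p ≠ 0

/-- `u ∈ C^k(cl Ω)`: `u` is `C^k` on an open neighborhood of the closure of `Ω`. -/
def ContDiffNearClosure (k : ℕ) (Ω : Set (ℝ × ℝ)) (u : ℝ × ℝ → ℝ) : Prop :=
  ∃ V : Set (ℝ × ℝ), IsOpen V ∧ closure Ω ⊆ V ∧ ContDiffOn ℝ k u V

/-- `u` solves problem (1.1): `u ∈ C³(cl Ω)`, `−Δu = f(u)` and `u > 0` in `Ω`,
`u = 0` on `∂Ω`. -/
def SolvesPb (Ω : Set (ℝ × ℝ)) (f : ℝ → ℝ) (u : ℝ × ℝ → ℝ) : Prop :=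
  ContDiffNearClosure 3 Ω u ∧
  (∀ q ∈ Ω, pdx (pdx u) q + pdy (pdy u) q = -f (u q)) ∧
  (∀ q ∈ Ω, 0 < u q) ∧
  (∀ q ∈ frontier Ω, u q = 0)

/-- `u` is semi-stable: `∫_Ω |∇φ|² − ∫_Ω f′(u) φ² ≥ 0` for all `φ ∈ C_c^∞(Ω)`. -/
def SemiStable (Ω : Set (ℝ × ℝ)) (f : ℝ → ℝ) (u : ℝ × ℝ → ℝ) : Prop :=
  ∀ φ : ℝ × ℝ → ℝ, ContDiff ℝ (⊤ : ℕ∞) φ → HasCompactSupport φ → tsupport φ ⊆ Ω →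
    0 ≤ (∫ x in Ω, ‖fderiv ℝ φ x‖ ^ 2) - ∫ x in Ω, deriv f (u x) * φ x ^ 2

/-!
With `H = D²u(q)` (symmetric since `u` is `C²`) and the rotated gradient `w = (u_y, -u_x)(q)`,
the components of `T(q)` are `-H(e₂, w)` and `H(e₁, w)`, so `T(q) = 0` iff `H w = 0`. Moreover
`∇u_θ(q) = H e_θ`, and in the plane `u_θ(q) = 0` says exactly that `w` is a multiple of `e_θ`.
Hence `H e_θ = 0` forces `H w = 0`, and conversely, if `∇u(q) ≠ 0`, the unit vector
`e_θ = w / |∇u(q)|` has `u_θ(q) = 0` and `H e_θ = 0`.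
-/

namespace ContinuousLinearMap

variable {F : Type*} [NormedAddCommGroup F] [NormedSpace ℝ F]

theorem apply_prod_mk (L : ℝ × ℝ →L[ℝ] F) (x y : ℝ) :
    L (x, y) = x • L (1, 0) + y • L (0, 1) := by
  rw [← L.map_smul, ← L.map_smul, ← map_add]
  simp

theorem eq_zero_iff_apply_std_basis (L : ℝ × ℝ →L[ℝ] F) :
    L = 0 ↔ L (1, 0) = 0 ∧ L (0, 1) = 0 := by
  refine ⟨fun h => by simp [h], fun ⟨h₁, h₂⟩ => ?_⟩
  refine ContinuousLinearMap.ext fun ⟨x, y⟩ => ?_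
  rw [L.apply_prod_mk, h₁, h₂, smul_zero, smul_zero, add_zero, zero_apply]

end ContinuousLinearMap

theorem exists_mem_Ico_cos_sin_eq {c s : ℝ} (h : c ^ 2 + s ^ 2 = 1) :
    ∃ θ ∈ Ico 0 (2 * π), cos θ = c ∧ sin θ = s := by
  obtain ⟨θ, hθ⟩ := (Complex.norm_eq_one_iff ⟨c, s⟩).1 <| by
    rw [Complex.norm_def, Complex.normSq_mk, ← sq, ← sq, h, Real.sqrt_one]
  have hc : cos θ = c := by rw [← Complex.exp_ofReal_mul_I_re, hθ]
  have hs : sin θ = s := by rw [← Complex.exp_ofReal_mul_I_im, hθ]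
  refine ⟨toIcoMod two_pi_pos 0 θ, toIcoMod_mem_Ico' _ _, ?_, ?_⟩ <;>
    rw [toIcoMod, zsmul_eq_mul]
  · rw [cos_sub_int_mul_two_pi, hc]
  · rw [sin_sub_int_mul_two_pi, hs]

theorem rotate_eq_smul_of_orthogonal {a b θ : ℝ} (h : cos θ * a + sin θ * b = 0) :
    ((b, -a) : ℝ × ℝ) = (cos θ * b - sin θ * a) • (cos θ, sin θ) := by
  have h1 := cos_sq_add_sin_sq θ
  ext <;> simp only [Prod.smul_mk, smul_eq_mul]
  · linear_combination (-b) * h1 + sin θ * h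
  · linear_combination a * h1 - cos θ * h

theorem fderiv_fderiv_apply_eq_flip {E F : Type*} [NormedAddCommGroup E] [NormedSpace ℝ E]
    [NormedAddCommGroup F] [NormedSpace ℝ F] {u : E → F} {q : E}
    (hu : DifferentiableAt ℝ (fderiv ℝ u) q) (v : E) :
    fderiv ℝ (fun p => fderiv ℝ u p v) q = (fderiv ℝ (fderiv ℝ u) q).flip v := by
  simpa using fderiv_clm_apply hu (differentiableAt_const v)

theorem ContDiffAt.differentiableAt_fderiv {E F : Type*} [NormedAddCommGroup E]
    [NormedSpace ℝ E] [NormedAddCommGroup F] [NormedSpace ℝ F] {u : E → F} {q : E}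
    (hu : ContDiffAt ℝ 2 u q) : DifferentiableAt ℝ (fderiv ℝ u) q :=
  (hu.fderiv_right (by norm_num)).differentiableAt one_ne_zero

theorem dird_eq_fderiv_apply (u : ℝ × ℝ → ℝ) (θ : ℝ) :
    dird u θ = fun p => fderiv ℝ u p (cos θ, sin θ) := by
  ext p
  rw [dird, (fderiv ℝ u p).apply_prod_mk (cos θ) (sin θ)]
  rfl

section

variable {u : ℝ × ℝ → ℝ} {q : ℝ × ℝ}

theorem fderiv_dird_eq (hu : ContDiffAt ℝ 2 u q) (θ : ℝ) :
    fderiv ℝ (dird u θ) q = (fderiv ℝ (fderiv ℝ u) q).flip (cos θ, sin θ) := by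
  rw [dird_eq_fderiv_apply, fderiv_fderiv_apply_eq_flip hu.differentiableAt_fderiv]

theorem Tvec_eq_zero_of_fderiv_eq_zero (h : fderiv ℝ u q = 0) : Tvec u q = 0 := by
  simp [Tvec, pdx, pdy, h]

theorem Tvec_eq_zero_iff (hu : ContDiffAt ℝ 2 u q) :
    Tvec u q = 0 ↔ (fderiv ℝ (fderiv ℝ u) q).flip (pdy u q, -pdx u q) = 0 := by
  set H := fderiv ℝ (fderiv ℝ u) q
  have hsymm : H (1, 0) (0, 1) = H (0, 1) (1, 0) := hu.isSymmSndFDerivAt (by simp) _ _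
  have hH : ∀ v w, fderiv ℝ (fun p => fderiv ℝ u p v) q w = H w v := fun v w => by
    rw [fderiv_fderiv_apply_eq_flip hu.differentiableAt_fderiv, ContinuousLinearMap.flip_apply]
  have hA : pdx (pdx u) q = H (1, 0) (1, 0) := hH _ _
  have hM : pdy (pdx u) q = H (0, 1) (1, 0) := hH _ _
  have hC : pdy (pdy u) q = H (0, 1) (0, 1) := hH _ _
  have h₁ : H.flip (pdy u q, -pdx u q) (1, 0) =
      pdx (pdx u) q * pdy u q - pdy (pdx u) q * pdx u q := by
    rw [ContinuousLinearMap.flip_apply, (H _).apply_prod_mk (pdy u q), hsymm, hA, hM, smul_eq_mul,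
      smul_eq_mul]
    ring
  have h₂ : H.flip (pdy u q, -pdx u q) (0, 1) =
      -(pdy (pdy u) q * pdx u q - pdy (pdx u) q * pdy u q) := by
    rw [ContinuousLinearMap.flip_apply, (H _).apply_prod_mk (pdy u q), hM, hC, smul_eq_mul,
      smul_eq_mul]
    ring
  rw [ContinuousLinearMap.eq_zero_iff_apply_std_basis, h₁, h₂, neg_eq_zero, Tvec, Prod.mk_eq_zero,
    and_comm]

theorem Tvec_eq_zero_of_dird {θ : ℝ} (hu : ContDiffAt ℝ 2 u q) (h₀ : dird u θ q = 0)
    (h₁ : fderiv ℝ (dird u θ) q = 0) : Tvec u q = 0 := by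
  rw [Tvec_eq_zero_iff hu, rotate_eq_smul_of_orthogonal h₀, map_smul, ← fderiv_dird_eq hu, h₁,
    smul_zero]

theorem exists_dird_eq_zero_of_Tvec_eq_zero (hu : ContDiffAt ℝ 2 u q) (hT : Tvec u q = 0)
    (hne : fderiv ℝ u q ≠ 0) :
    ∃ θ ∈ Ico 0 (2 * π),
      (cos θ, sin θ) = (pdy u q / Real.sqrt (pdx u q ^ 2 + pdy u q ^ 2),
        -pdx u q / Real.sqrt (pdx u q ^ 2 + pdy u q ^ 2)) ∧
      dird u θ q = 0 ∧ fderiv ℝ (dird u θ) q = 0 := by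
  have hT' := (Tvec_eq_zero_iff hu).1 hT
  set a := pdx u q
  set b := pdy u q
  set r := Real.sqrt (a ^ 2 + b ^ 2)
  have hab : a ≠ 0 ∨ b ≠ 0 := by
    contrapose! hne
    exact (fderiv ℝ u q).eq_zero_iff_apply_std_basis.2 hne
  have hr : 0 < r := Real.sqrt_pos.2 (by rcases hab with h | h <;> positivity)
  have hr2 : r ^ 2 = a ^ 2 + b ^ 2 := Real.sq_sqrt (by positivity)
  obtain ⟨θ, hθ, hc, hs⟩ := exists_mem_Ico_cos_sin_eq (c := b / r) (s := -a / r) <| by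
    field_simp
    linarith
  have he : ((cos θ, sin θ) : ℝ × ℝ) = r⁻¹ • (b, -a) := by
    rw [hc, hs, Prod.smul_mk, smul_eq_mul, smul_eq_mul, div_eq_inv_mul, div_eq_inv_mul, mul_neg]
  refine ⟨θ, hθ, by rw [hc, hs], ?_, ?_⟩
  · rw [dird, hc, hs]
    ring
  · rw [fderiv_dird_eq hu, he, map_smul, hT', smul_zero]

end

/-- characterization of the zeros of the vector field `T`. -/
theorem Tvec_zero_iff
    (Ω : Set (ℝ × ℝ)) (u : ℝ × ℝ → ℝ) (q : ℝ × ℝ)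
    (hΩopen : IsOpen Ω) (hu : ContDiffOn ℝ 2 u Ω) (hq : q ∈ Ω) :
    (Tvec u q = 0 ↔
      fderiv ℝ u q = 0 ∨
        ∃ θ ∈ Set.Ico (0 : ℝ) (2 * π),
          dird u θ q = 0 ∧ fderiv ℝ (dird u θ) q = 0) ∧
    (Tvec u q = 0 → fderiv ℝ u q ≠ 0 →
      ∃ θ ∈ Set.Ico (0 : ℝ) (2 * π),
        (Real.cos θ, Real.sin θ) =
          (pdy u q / Real.sqrt ((pdx u q) ^ 2 + (pdy u q) ^ 2),
           -(pdx u q) / Real.sqrt ((pdx u q) ^ 2 + (pdy u q) ^ 2)) ∧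
        dird u θ q = 0 ∧ fderiv ℝ (dird u θ) q = 0) := by
  have hu₂ : ContDiffAt ℝ 2 u q := hu.contDiffAt (hΩopen.mem_nhds hq)
  refine ⟨⟨fun hT => ?_, ?_⟩, exists_dird_eq_zero_of_Tvec_eq_zero hu₂⟩
  · by_cases hne : fderiv ℝ u q = 0
    · exact Or.inl hne
    · obtain ⟨θ, hθ, -, h⟩ := exists_dird_eq_zero_of_Tvec_eq_zero hu₂ hT hne
      exact Or.inr ⟨θ, hθ, h⟩
  · rintro (h | ⟨θ, -, h₀, h₁⟩)
    · exact Tvec_eq_zero_of_fderiv_eq_zero h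
    · exact Tvec_eq_zero_of_dird hu₂ h₀ h₁
end
end

section
/- Let u be of class C³ on a neighborhood of q ∈ ℝ² and suppose ∇u(q) = 0. Then the Jacobian determinant of the map T at q equals (u_xx(q)u_yy(q) − u_xy(q)²)², i.e. det DT(q) = (det Hess u(q))². In particular, if q is a nondegenerate critical point of u then det DT(q) > 0. -/
open Real Set MeasureTheory

noncomputable section

/-- Jacobian determinant of a map `T : ℝ² → ℝ²`. -/
def jdet (T : ℝ × ℝ → ℝ × ℝ) (q : ℝ × ℝ) : ℝ :=
  (fderiv ℝ T q (1, 0)).1 * (fderiv ℝ T q (0, 1)).2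
    - (fderiv ℝ T q (0, 1)).1 * (fderiv ℝ T q (1, 0)).2

/-!
At a critical point the factors `u_x`, `u_y` of `T` vanish, so the product rule gives
`DT(q) = (u_yy ∇u_x − u_xy ∇u_y, u_xx ∇u_y − u_xy ∇u_x)`. Since `∇u_x = (u_xx, u_xy)` and,
by Schwarz, `∇u_y = (u_xy, u_yy)`, this is `det Hess u(q)` times the identity, whose
determinant is `(det Hess u(q))²`.
-/

def hessDet (u : ℝ × ℝ → ℝ) (q : ℝ × ℝ) : ℝ :=
  pdx (pdx u) q * pdy (pdy u) q - pdy (pdx u) q ^ 2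

theorem HasFDerivAt.mul_of_right_eq_zero {E : Type*} [NormedAddCommGroup E] [NormedSpace ℝ E]
    {f g : E → ℝ} {g' : E →L[ℝ] ℝ} {x : E} (hf : DifferentiableAt ℝ f x)
    (hg : HasFDerivAt g g' x) (hg0 : g x = 0) :
    HasFDerivAt (fun y => f y * g y) (f x • g') x := by
  simpa [hg0] using hf.hasFDerivAt.fun_mul hg

theorem jdet_eq_sq_of_hasFDerivAt_smul_id {T : ℝ × ℝ → ℝ × ℝ} {q : ℝ × ℝ} {c : ℝ}
    (hT : HasFDerivAt T (c • ContinuousLinearMap.id ℝ (ℝ × ℝ)) q) : jdet T q = c ^ 2 := by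
  simp [jdet, hT.fderiv, sq]

section

variable {u : ℝ × ℝ → ℝ} {q : ℝ × ℝ}

theorem ContDiffAt.pdx {n : WithTop ℕ∞} (hu : ContDiffAt ℝ (n + 1) u q) :
    ContDiffAt ℝ n (pdx u) q :=
  (hu.fderiv_right le_rfl).clm_apply contDiffAt_const

theorem ContDiffAt.pdy {n : WithTop ℕ∞} (hu : ContDiffAt ℝ (n + 1) u q) :
    ContDiffAt ℝ n (pdy u) q :=
  (hu.fderiv_right le_rfl).clm_apply contDiffAt_const

theorem fderiv_pdx_apply (hu : DifferentiableAt ℝ (fderiv ℝ u) q) (v : ℝ × ℝ) :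
    fderiv ℝ (pdx u) q v = fderiv ℝ (fderiv ℝ u) q v (1, 0) := by
  change fderiv ℝ (fun p => fderiv ℝ u p (1, 0)) q v = _
  simp [fderiv_clm_apply hu (differentiableAt_const _)]

theorem fderiv_pdy_apply (hu : DifferentiableAt ℝ (fderiv ℝ u) q) (v : ℝ × ℝ) :
    fderiv ℝ (pdy u) q v = fderiv ℝ (fderiv ℝ u) q v (0, 1) := by
  change fderiv ℝ (fun p => fderiv ℝ u p (0, 1)) q v = _
  simp [fderiv_clm_apply hu (differentiableAt_const _)]

theorem pdx_pdy_comm (hu : ContDiffAt ℝ 2 u q) : pdx (pdy u) q = pdy (pdx u) q := by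
  have hd : DifferentiableAt ℝ (fderiv ℝ u) q :=
    (hu.fderiv_right (m := 1) le_rfl).differentiableAt one_ne_zero
  rw [pdx, pdy, fderiv_pdx_apply hd, fderiv_pdy_apply hd]
  exact hu.isSymmSndFDerivAt (by simp) (1, 0) (0, 1)

theorem hasFDerivAt_Tvec_of_fderiv_eq_zero (hu : ContDiffAt ℝ 3 u q)
    (hcrit : fderiv ℝ u q = 0) :
    HasFDerivAt (Tvec u) (hessDet u q • ContinuousLinearMap.id ℝ (ℝ × ℝ)) q := by
  have hx : pdx u q = 0 := by simp [pdx, hcrit]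
  have hy : pdy u q = 0 := by simp [pdy, hcrit]
  have dx : DifferentiableAt ℝ (pdx u) q := (hu.pdx (n := 2)).differentiableAt two_ne_zero
  have dy : DifferentiableAt ℝ (pdy u) q := (hu.pdy (n := 2)).differentiableAt two_ne_zero
  have dxx : DifferentiableAt ℝ (pdx (pdx u)) q :=
    ((hu.pdx (n := 2)).pdx (n := 1)).differentiableAt one_ne_zero
  have dxy : DifferentiableAt ℝ (pdy (pdx u)) q :=
    ((hu.pdx (n := 2)).pdy (n := 1)).differentiableAt one_ne_zero
  have dyy : DifferentiableAt ℝ (pdy (pdy u)) q :=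
    ((hu.pdy (n := 2)).pdy (n := 1)).differentiableAt one_ne_zero
  have hsymm := pdx_pdy_comm (hu.of_le (by norm_num))
  have hT := ((HasFDerivAt.mul_of_right_eq_zero dyy dx.hasFDerivAt hx).sub
    (HasFDerivAt.mul_of_right_eq_zero dxy dy.hasFDerivAt hy)).prodMk
    ((HasFDerivAt.mul_of_right_eq_zero dxx dy.hasFDerivAt hy).sub
    (HasFDerivAt.mul_of_right_eq_zero dxy dx.hasFDerivAt hx))
  refine hT.congr_fderiv ?_
  have e1 : fderiv ℝ (pdx u) q (1, 0) = pdx (pdx u) q := rfl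
  have e2 : fderiv ℝ (pdx u) q (0, 1) = pdy (pdx u) q := rfl
  have e3 : fderiv ℝ (pdy u) q (1, 0) = pdx (pdy u) q := rfl
  have e4 : fderiv ℝ (pdy u) q (0, 1) = pdy (pdy u) q := rfl
  ext <;>
    simp only [ContinuousLinearMap.comp_apply, ContinuousLinearMap.inl_apply,
      ContinuousLinearMap.inr_apply, ContinuousLinearMap.prod_apply, sub_apply, smul_apply,
      smul_eq_mul, e1, e2, e3, e4, hsymm, hessDet, ContinuousLinearMap.smul_comp,
      ContinuousLinearMap.id_comp, Prod.smul_mk, mul_one, mul_zero] <;>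
    ring

end

/-- at a critical point of `u`, `det DT = (det Hess u)²`; in
particular it is positive at nondegenerate critical points. -/
theorem jdet_Tvec_at_critical_point
    (U : Set (ℝ × ℝ)) (u : ℝ × ℝ → ℝ) (q : ℝ × ℝ)
    (hU : IsOpen U) (hq : q ∈ U) (hu : ContDiffOn ℝ 3 u U)
    (hcrit : fderiv ℝ u q = 0) :
    jdet (Tvec u) q =
      (pdx (pdx u) q * pdy (pdy u) q - pdy (pdx u) q ^ 2) ^ 2 ∧
    (pdx (pdx u) q * pdy (pdy u) q - pdy (pdx u) q ^ 2 ≠ 0 →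
      0 < jdet (Tvec u) q) := by
  have hj : jdet (Tvec u) q = hessDet u q ^ 2 := jdet_eq_sq_of_hasFDerivAt_smul_id
    (hasFDerivAt_Tvec_of_fderiv_eq_zero (hu.contDiffAt (hU.mem_nhds hq)) hcrit)
  exact ⟨hj, fun hne => hj ▸ sq_pos_of_ne_zero hne⟩
end
end

section
/- Let Ω ⊂ ℝ² be an open, bounded domain with C¹ boundary with outward unit normal ν, and let u ∈ C²(cl Ω) satisfy u = 0 on ∂Ω. Let p ∈ Ω be such that ⟨q − p, ν(q)⟩ > 0 for every q ∈ ∂Ω (Ω is strictly star-shaped with respect to p). Assume that at every q ∈ ∂Ω one has ⟨∇u(q), ν(q)⟩ < 0 and u_yy(q)u_x(q)² − 2u_xy(q)u_x(q)u_y(q) + u_xx(q)u_y(q)² < 0 (equivalently, the level-set curvature 𝔎(q) is strictly positive). Then for every t ∈ [0,1] and every q ∈ ∂Ω, t T(q) + (1 − t)(q − p) ≠ 0. -/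
open Real Set MeasureTheory

noncomputable section

/-!
On `∂Ω = {ρ = 0}` the function `u` vanishes, so by Lagrange's multiplier rule `∇u(q)` is a
multiple of `∇ρ(q)`; the Hopf condition `u_ν < 0` makes it a negative multiple, and then strict
star-shapedness gives `⟨q - p, ∇u(q)⟩ < 0`. Expanding, `⟨T(q), ∇u(q)⟩` is exactly the numerator
of the curvature, which is negative. So `T(q)` and `q - p` both lie in the open half-plane
`{v | ⟨v, ∇u(q)⟩ < 0}`, which is convex and does not contain the origin.
-/

open Topology

section Frontier

variable {E : Type*} [NormedAddCommGroup E] [NormedSpace ℝ E]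

/-- If `x` were not in the closure of `{ρ < 0}`, it would be a local minimum of `ρ`. -/
lemma mem_frontier_setOf_neg_of_fderiv_ne_zero {ρ : E → ℝ} {x : E} (hx : ρ x = 0)
    (hρx : fderiv ℝ ρ x ≠ 0) : x ∈ frontier {y | ρ y < 0} := by
  refine ⟨?_, fun hint => ne_of_lt (interior_subset (s := {y | ρ y < 0}) hint) hx⟩
  by_contra hcl
  rw [mem_closure_iff_frequently, Filter.not_frequently] at hcl
  exact hρx (IsLocalMin.fderiv_eq_zero (hcl.mono fun y hy => by simpa [hx] using hy))

lemma IsLocalExtrOn.exists_eq_smul_of_hasStrictFDerivAt [CompleteSpace E] {f φ : E → ℝ}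
    {x : E} {f' φ' : E →L[ℝ] ℝ} (hextr : IsLocalExtrOn φ {y | f y = f x} x)
    (hf : HasStrictFDerivAt f f' x) (hφ : HasStrictFDerivAt φ φ' x) (hf' : f' ≠ 0) :
    ∃ c : ℝ, φ' = c • f' := by
  obtain ⟨a, b, hab, hcomb⟩ := hextr.exists_multipliers_of_hasStrictFDerivAt_1d hf hφ
  have hb : b ≠ 0 := by
    rintro rfl
    have ha : a ≠ 0 := fun ha => hab (by simp [ha])
    exact hf' (by simpa [ha] using hcomb)
  refine ⟨-a / b, ContinuousLinearMap.ext fun v => ?_⟩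
  have hv := congrArg (· v) hcomb
  simp only [add_apply, smul_apply, smul_eq_mul, zero_apply] at hv ⊢
  field_simp
  linarith

/-- Near `q` every zero of `ρ` is a boundary point, where `u` vanishes; so `q` is a local
extremum of `u` on the level set `{ρ = 0}` and Lagrange's rule applies. -/
lemma exists_fderiv_eq_smul_of_eq_zero_on_frontier [CompleteSpace E] {ρ u : E → ℝ}
    {u' : E →L[ℝ] ℝ} {q : E} (hρ : ContDiff ℝ 1 ρ)
    (hρ' : ∀ y ∈ frontier {y | ρ y < 0}, fderiv ℝ ρ y ≠ 0)
    (hu0 : ∀ y ∈ frontier {y | ρ y < 0}, u y = 0) (hq : q ∈ frontier {y | ρ y < 0})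
    (hu : HasStrictFDerivAt u u' q) : ∃ c : ℝ, u' = c • fderiv ℝ ρ q := by
  have hρq : ρ q = 0 := frontier_lt_subset_eq hρ.continuous continuous_const hq
  have hnondeg : {y | fderiv ℝ ρ y ≠ 0} ∈ 𝓝 q :=
    (isOpen_compl_singleton.preimage (hρ.continuous_fderiv one_ne_zero)).mem_nhds (hρ' q hq)
  have hextr : IsLocalExtrOn u {y | ρ y = ρ q} q := by
    refine Or.inl ?_
    filter_upwards [nhdsWithin_le_nhds hnondeg, self_mem_nhdsWithin] with y hy hyq
    rw [hu0 q hq, hu0 y (mem_frontier_setOf_neg_of_fderiv_ne_zero (hyq.trans hρq) hy)]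
  exact hextr.exists_eq_smul_of_hasStrictFDerivAt
    (hρ.contDiffAt.hasStrictFDerivAt one_ne_zero) hu (hρ' q hq)

end Frontier

section HalfSpace

variable {E : Type*} [AddCommGroup E] [Module ℝ E] [TopologicalSpace E]

lemma smul_add_one_sub_smul_ne_zero_of_apply_neg (ℓ : E →L[ℝ] ℝ) {a b : E} (ha : ℓ a < 0)
    (hb : ℓ b < 0) {t : ℝ} (ht : t ∈ Icc (0 : ℝ) 1) : t • a + (1 - t) • b ≠ 0 := by
  intro h
  have hseg := convex_Iio (0 : ℝ) ha hb ht.1 (sub_nonneg.2 ht.2) (add_sub_cancel t 1)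
  rw [← map_smul, ← map_smul, ← map_add, h, map_zero] at hseg
  exact lt_irrefl (0 : ℝ) (mem_Iio.1 hseg)

lemma apply_neg_of_eq_smul {ℓ m : E →L[ℝ] ℝ} {c : ℝ} (h : m = c • ℓ) {n d : E}
    (hn : 0 < ℓ n) (hmn : m n < 0) (hd : 0 < ℓ d) : m d < 0 := by
  subst h
  simp only [smul_apply, smul_eq_mul] at hmn ⊢
  exact mul_neg_of_neg_of_pos (neg_of_mul_neg_left hmn hn.le) hd

end HalfSpace

section Plane

lemma ContinuousLinearMap.apply_eq_mul_add_mul (ℓ : ℝ × ℝ →L[ℝ] ℝ) (v : ℝ × ℝ) :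
    ℓ v = ℓ (1, 0) * v.1 + ℓ (0, 1) * v.2 := by
  conv_lhs => rw [show v = v.1 • ((1, 0) : ℝ × ℝ) + v.2 • ((0, 1) : ℝ × ℝ) by ext <;> simp]
  rw [map_add, map_smul, map_smul, smul_eq_mul, smul_eq_mul, mul_comm, mul_comm v.2]

variable {u : ℝ × ℝ → ℝ} {q : ℝ × ℝ}

lemma fderiv_apply_eq_pdx_mul_add_pdy_mul (v : ℝ × ℝ) :
    fderiv ℝ u q v = pdx u q * v.1 + pdy u q * v.2 :=
  (fderiv ℝ u q).apply_eq_mul_add_mul v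

lemma fderiv_ne_zero_of_grad_ne_zero (h : ((pdx u q, pdy u q) : ℝ × ℝ) ≠ 0) :
    fderiv ℝ u q ≠ 0 :=
  fun h0 => h (by simp [pdx, pdy, h0])

lemma fderiv_apply_Tvec :
    fderiv ℝ u q (Tvec u q) = pdy (pdy u) q * (pdx u q) ^ 2
      - 2 * pdy (pdx u) q * pdx u q * pdy u q + pdx (pdx u) q * (pdy u q) ^ 2 := by
  rw [fderiv_apply_eq_pdx_mul_add_pdy_mul, Tvec]
  ring

variable {ν : ℝ × ℝ}

lemma dot_eq_inv_norm_mul_fderiv_apply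
    (hν : ν = ‖((pdx u q, pdy u q) : ℝ × ℝ)‖⁻¹ • ((pdx u q, pdy u q) : ℝ × ℝ)) (v : ℝ × ℝ) :
    v.1 * ν.1 + v.2 * ν.2 = ‖((pdx u q, pdy u q) : ℝ × ℝ)‖⁻¹ * fderiv ℝ u q v := by
  rw [fderiv_apply_eq_pdx_mul_add_pdy_mul, hν]
  simp only [Prod.smul_mk, smul_eq_mul]
  ring

lemma fderiv_apply_pos_of_eq_inv_norm_smul (hg : ((pdx u q, pdy u q) : ℝ × ℝ) ≠ 0)
    (hν : ν = ‖((pdx u q, pdy u q) : ℝ × ℝ)‖⁻¹ • ((pdx u q, pdy u q) : ℝ × ℝ)) :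
    0 < fderiv ℝ u q ν := by
  have hpos : 0 < ‖((pdx u q, pdy u q) : ℝ × ℝ)‖⁻¹ := inv_pos.2 (norm_pos_iff.2 hg)
  have hsq : 0 < pdx u q ^ 2 + pdy u q ^ 2 := by
    rcases not_and_or.1 (Prod.mk_eq_zero.not.1 hg) with h | h <;> positivity
  rw [fderiv_apply_eq_pdx_mul_add_pdy_mul, hν]
  simp only [Prod.smul_mk, smul_eq_mul]
  nlinarith

end Plane

theorem homotopy_admissible_positive_curvature_general
    (Ω : Set (ℝ × ℝ)) (u : ℝ × ℝ → ℝ) (ρ : ℝ × ℝ → ℝ) (ν : ℝ × ℝ → ℝ × ℝ)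
    (p : ℝ × ℝ)
    -- `Ω` has `C¹` boundary with outward unit normal `ν`
    (hρ : ContDiff ℝ 1 ρ) (hΩρ : Ω = {q : ℝ × ℝ | ρ q < 0})
    (hρgrad : ∀ q ∈ frontier Ω, ((pdx ρ q, pdy ρ q) : ℝ × ℝ) ≠ 0)
    (hν : ∀ q ∈ frontier Ω,
      ν q = ‖((pdx ρ q, pdy ρ q) : ℝ × ℝ)‖⁻¹ • ((pdx ρ q, pdy ρ q) : ℝ × ℝ))
    -- `u ∈ C²(cl Ω)` and `u = 0` on `∂Ω`
    (hu : ∃ V : Set (ℝ × ℝ), IsOpen V ∧ closure Ω ⊆ V ∧ ContDiffOn ℝ 2 u V)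
    (hu0 : ∀ q ∈ frontier Ω, u q = 0)
    -- `Ω` is strictly star-shaped with respect to `p ∈ Ω`
    (hstar : ∀ q ∈ frontier Ω,
      0 < (q.1 - p.1) * (ν q).1 + (q.2 - p.2) * (ν q).2)
    -- `u_ν < 0` on `∂Ω`
    (hHopf : ∀ q ∈ frontier Ω, pdx u q * (ν q).1 + pdy u q * (ν q).2 < 0)
    -- strictly positive level-set curvature on `∂Ω`
    (hnum : ∀ q ∈ frontier Ω,
      pdy (pdy u) q * (pdx u q) ^ 2 - 2 * pdy (pdx u) q * pdx u q * pdy u q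
        + pdx (pdx u) q * (pdy u q) ^ 2 < 0) :
    ∀ t ∈ Set.Icc (0 : ℝ) 1, ∀ q ∈ frontier Ω,
      t • Tvec u q + (1 - t) • (q - p) ≠ (0 : ℝ × ℝ) := by
  intro t ht q hq
  subst hΩρ
  obtain ⟨V, hVopen, hVsub, huV⟩ := hu
  have hDu : HasStrictFDerivAt u (fderiv ℝ u q) q :=
    (huV.contDiffAt (hVopen.mem_nhds (hVsub (frontier_subset_closure hq)))).hasStrictFDerivAt
      (by norm_num)
  obtain ⟨c, hc⟩ := exists_fderiv_eq_smul_of_eq_zero_on_frontier hρ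
    (fun y hy => fderiv_ne_zero_of_grad_ne_zero (hρgrad y hy)) hu0 hq hDu
  have hρν : 0 < fderiv ℝ ρ q (ν q) :=
    fderiv_apply_pos_of_eq_inv_norm_smul (hρgrad q hq) (hν q hq)
  have huν : fderiv ℝ u q (ν q) < 0 := by
    rw [fderiv_apply_eq_pdx_mul_add_pdy_mul]
    exact hHopf q hq
  have hρqp : 0 < fderiv ℝ ρ q (q - p) := by
    have h : 0 < (q - p).1 * (ν q).1 + (q - p).2 * (ν q).2 := hstar q hq
    rw [dot_eq_inv_norm_mul_fderiv_apply (hν q hq)] at h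
    exact pos_of_mul_pos_right h (inv_nonneg.2 (norm_nonneg _))
  refine smul_add_one_sub_smul_ne_zero_of_apply_neg (fderiv ℝ u q) ?_ ?_ ht
  · exact fderiv_apply_Tvec.trans_lt (hnum q hq)
  · exact apply_neg_of_eq_smul hc hρν huν hρqp

/-- admissibility of the homotopy `tT + (1−t)(· − p)` on the
boundary, under strictly positive level-set curvature on the boundary. -/
theorem homotopy_admissible_positive_curvature
    (Ω : Set (ℝ × ℝ)) (u : ℝ × ℝ → ℝ) (ρ : ℝ × ℝ → ℝ) (ν : ℝ × ℝ → ℝ × ℝ)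
    (p : ℝ × ℝ)
    (hΩopen : IsOpen Ω) (hΩne : Ω.Nonempty) (hΩbd : Bornology.IsBounded Ω)
    -- `Ω` has `C¹` boundary with outward unit normal `ν`
    (hρ : ContDiff ℝ 1 ρ) (hΩρ : Ω = {q : ℝ × ℝ | ρ q < 0})
    (hρgrad : ∀ q ∈ frontier Ω, ((pdx ρ q, pdy ρ q) : ℝ × ℝ) ≠ 0)
    (hν : ∀ q ∈ frontier Ω,
      ν q = ‖((pdx ρ q, pdy ρ q) : ℝ × ℝ)‖⁻¹ • ((pdx ρ q, pdy ρ q) : ℝ × ℝ))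
    -- `u ∈ C²(cl Ω)` and `u = 0` on `∂Ω`
    (hu : ∃ V : Set (ℝ × ℝ), IsOpen V ∧ closure Ω ⊆ V ∧ ContDiffOn ℝ 2 u V)
    (hu0 : ∀ q ∈ frontier Ω, u q = 0)
    -- `Ω` is strictly star-shaped with respect to `p ∈ Ω`
    (hp : p ∈ Ω)
    (hstar : ∀ q ∈ frontier Ω,
      0 < (q.1 - p.1) * (ν q).1 + (q.2 - p.2) * (ν q).2)
    -- `u_ν < 0` on `∂Ω`
    (hHopf : ∀ q ∈ frontier Ω, pdx u q * (ν q).1 + pdy u q * (ν q).2 < 0)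
    -- strictly positive level-set curvature on `∂Ω`
    (hnum : ∀ q ∈ frontier Ω,
      pdy (pdy u) q * (pdx u q) ^ 2 - 2 * pdy (pdx u) q * pdx u q * pdy u q
        + pdx (pdx u) q * (pdy u q) ^ 2 < 0) :
    ∀ t ∈ Set.Icc (0 : ℝ) 1, ∀ q ∈ frontier Ω,
      t • Tvec u q + (1 - t) • (q - p) ≠ (0 : ℝ × ℝ) :=
  homotopy_admissible_positive_curvature_general Ω u ρ ν p hρ hΩρ hρgrad hν hu hu0 hstar hHopf hnum
end
end
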